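/- arXiv:1512.07955 — 2 statements merged into one kernel-verified Lean document; each statement's English description precedes it below -/
import Mathlib

section
/- Let β ≠ 0, M ≥ N ≥ 1, and let u₁,…,u_N be nonzero complex numbers with u_j² ≠ u_k² for j ≠ k and u_j² ≠ −β for all j. Then for any 1 ≤ x₁ < ⋯ < x_N ≤ M: ∏_{j=1}^N [u_j^M/(−β⁻¹u_j−u_j⁻¹)] · ∏_{1≤j<k≤N} (−u_j⁻²u_k²)/(1−u_j⁻²u_k²) · Σ_{σ∈S_N} ∏_{1≤j<k≤N, σ(j)>σ(k)} (−u_{σ(j)}² u_{σ(k)}⁻²)⁻¹ · ∏_{j=1}^N ((−β⁻¹u_{σ(j)}−u_{σ(j)}⁻¹)/u_{σ(j)})^{x_j} = (−β)^{−N(N−1)/2} ∏_{j=1}^N u_j^{M−1} · G_λ(z₁,…,z_N;β), where z_j = −β⁻¹ − u_j⁻² and λ_j = x_{N−j+1} − N + j − 1. -/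
noncomputable section

private lemma signAux_eq_sign {n : ℕ} (σ : Equiv.Perm (Fin n)) :
    Equiv.Perm.signAux σ = Equiv.Perm.sign σ := by
  rcases lt_or_ge n 2 with h | h
  · have hs : Subsingleton (Fin n) := ⟨fun a b => Fin.ext (by omega)⟩
    have : σ = 1 := by ext i; exact congrArg Fin.val (Subsingleton.elim _ _)
    subst this; simp [Equiv.Perm.signAux_one]
  · have : Nontrivial (Fin n) := Fin.nontrivial_iff_two_le.mpr h
    let s : Equiv.Perm (Fin n) →* ℤˣ :=
      MonoidHom.mk' Equiv.Perm.signAux Equiv.Perm.signAux_mul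
    have hsurj : Function.Surjective s := by
      intro a
      rcases Int.units_eq_one_or a with rfl | rfl
      · exact ⟨1, Equiv.Perm.signAux_one n⟩
      · obtain ⟨i, j, hij⟩ := exists_pair_ne (Fin n)
        exact ⟨Equiv.swap i j, Equiv.Perm.signAux_swap hij⟩
    exact DFunLike.congr_fun (Equiv.Perm.eq_sign_of_surjective_hom hsurj) σ

private lemma sign_as_prod {n : ℕ} (σ : Equiv.Perm (Fin n)) :
    ∏ j : Fin n, ∏ k : Fin n, (if j < k ∧ σ k < σ j then (-1 : ℂ) else 1)
      = ((Equiv.Perm.sign σ : ℤ) : ℂ) := by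
  rw [← signAux_eq_sign]
  unfold Equiv.Perm.signAux Equiv.Perm.finPairsLT
  push_cast
  rw [Finset.prod_sigma]
  rw [Finset.prod_comm]
  refine Finset.prod_congr rfl fun k _ => ?_
  have hset : (Finset.univ : Finset (Fin n)).filter (fun j => j < k)
      = (Finset.range (k : ℕ)).attachFin (fun m hm => lt_trans (Finset.mem_range.mp hm) k.isLt) := by
    ext b
    rw [Finset.mem_filter, Finset.mem_attachFin, Finset.mem_range, Fin.lt_def]
    simp
  rw [Finset.prod_congr hset.symm (fun j _ => rfl), Finset.prod_filter]
  refine Finset.prod_congr rfl fun j _ => ?_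
  by_cases h1 : j < k
  · by_cases h2 : σ k < σ j
    · simp [h1, h2, le_of_lt h2]
    · have hne : σ j ≠ σ k := fun h => (ne_of_lt h1) (σ.injective h)
      have h3 : ¬ σ k ≤ σ j := fun hle => hne (le_antisymm (not_lt.mp h2) hle)
      simp [h1, h2, h3]
  · simp [h1]

private lemma card_inv_count {n : ℕ} (σ : Equiv.Perm (Fin n)) (j : Fin n) :
    (Finset.univ.filter (fun k => j < k ∧ σ k < σ j)).card + (j : ℕ)
      = (Finset.univ.filter (fun k => k < j ∧ σ j < σ k)).card + (σ j : ℕ) := by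
  classical
  have h1 : (Finset.univ.filter (fun k => σ k < σ j)).card = (σ j : ℕ) := by
    have himg : Finset.univ.filter (fun k => σ k < σ j)
        = (Finset.univ.filter (fun m => m < σ j)).map σ.symm.toEmbedding := by
      ext k
      simp only [Finset.mem_filter, Finset.mem_map, Finset.mem_univ, true_and,
        Equiv.coe_toEmbedding]
      constructor
      · intro h; exact ⟨σ k, h, σ.symm_apply_apply k⟩
      · rintro ⟨m, hm, rfl⟩; simpa using hm
    rw [himg, Finset.card_map]
    have : Finset.univ.filter (fun m => m < σ j) = Finset.Iio (σ j) := by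
      ext m; simp
    rw [this, Fin.card_Iio]
  have h2 : Finset.univ.filter (fun k => j < k ∧ σ k < σ j)
        ∪ Finset.univ.filter (fun k => k < j ∧ σ k < σ j)
      = Finset.univ.filter (fun k => σ k < σ j) := by
    ext k
    simp only [Finset.mem_union, Finset.mem_filter, Finset.mem_univ, true_and]
    constructor
    · rintro (⟨_, h⟩ | ⟨_, h⟩) <;> exact h
    · intro h
      rcases lt_trichotomy j k with hk | rfl | hk
      · exact Or.inl ⟨hk, h⟩
      · exact absurd h (lt_irrefl _)
      · exact Or.inr ⟨hk, h⟩
  have h3 : Finset.univ.filter (fun k => k < j ∧ σ j < σ k)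
        ∪ Finset.univ.filter (fun k => k < j ∧ σ k < σ j)
      = Finset.univ.filter (fun k => k < j) := by
    ext k
    simp only [Finset.mem_union, Finset.mem_filter, Finset.mem_univ, true_and]
    constructor
    · rintro (⟨h, _⟩ | ⟨h, _⟩) <;> exact h
    · intro h
      rcases lt_trichotomy (σ j) (σ k) with hk | he | hk
      · exact Or.inl ⟨h, hk⟩
      · exact absurd (σ.injective he.symm) (ne_of_lt h)
      · exact Or.inr ⟨h, hk⟩
  have h4 : (Finset.univ.filter (fun k : Fin n => k < j)).card = (j : ℕ) := by
    have : Finset.univ.filter (fun k : Fin n => k < j) = Finset.Iio j := by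
      ext m; simp
    rw [this, Fin.card_Iio]
  have d2 : Disjoint (Finset.univ.filter (fun k => j < k ∧ σ k < σ j))
      (Finset.univ.filter (fun k => k < j ∧ σ k < σ j)) := by
    rw [Finset.disjoint_filter]
    rintro k _ ⟨h, _⟩ ⟨h', _⟩; exact absurd (h.trans h') (lt_irrefl _)
  have d3 : Disjoint (Finset.univ.filter (fun k => k < j ∧ σ j < σ k))
      (Finset.univ.filter (fun k => k < j ∧ σ k < σ j)) := by
    rw [Finset.disjoint_filter]
    rintro k _ ⟨_, h⟩ ⟨_, h'⟩; exact absurd (h.trans h') (lt_irrefl _)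
  have e2 := Finset.card_union_of_disjoint d2
  have e3 := Finset.card_union_of_disjoint d3
  rw [h2] at e2; rw [h3] at e3
  omega

private lemma prod_ite_const' {n : ℕ} (p : Fin n → Prop) [DecidablePred p] (c : ℂ) :
    ∏ k, (if p k then c else 1) = c ^ (Finset.univ.filter p).card := by
  rw [Finset.prod_ite, Finset.prod_const, Finset.prod_const_one, mul_one]

private lemma inv_prod_eq {n : ℕ} (σ : Equiv.Perm (Fin n)) (t : Fin n → ℂ) (ht : ∀ p, t p ≠ 0)
    (c : Fin n → Fin n → ℂ) (hc : ∀ p q, c p q = -1 * (t p * (t q)⁻¹)) :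
    ∏ j, ∏ k, (if j < k ∧ σ k < σ j then c (σ j) (σ k) else 1)
      = ((Equiv.Perm.sign σ : ℤ) : ℂ) * ∏ j, t (σ j) ^ (((σ j : ℕ) : ℤ) - ((j : ℕ) : ℤ)) := by
  classical
  have step1 : ∀ j k : Fin n, (if j < k ∧ σ k < σ j then c (σ j) (σ k) else 1)
      = (if j < k ∧ σ k < σ j then (-1 : ℂ) else 1)
        * ((if j < k ∧ σ k < σ j then t (σ j) else 1)
          * (if j < k ∧ σ k < σ j then (t (σ k))⁻¹ else 1)) := by
    intro j k
    by_cases h : j < k ∧ σ k < σ j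
    · simp only [h, and_self, if_true]; rw [hc]
    · simp [h]
  calc ∏ j, ∏ k, (if j < k ∧ σ k < σ j then c (σ j) (σ k) else 1)
      = (∏ j, ∏ k, (if j < k ∧ σ k < σ j then (-1 : ℂ) else 1))
        * ((∏ j, ∏ k, (if j < k ∧ σ k < σ j then t (σ j) else 1))
          * (∏ j, ∏ k, (if j < k ∧ σ k < σ j then (t (σ k))⁻¹ else 1))) := by
        simp_rw [step1, Finset.prod_mul_distrib]
    _ = ((Equiv.Perm.sign σ : ℤ) : ℂ) * ∏ j, t (σ j) ^ (((σ j : ℕ) : ℤ) - ((j : ℕ) : ℤ)) := by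
        rw [sign_as_prod]
        congr 1
        rw [Finset.prod_comm (f := fun j k => (if j < k ∧ σ k < σ j then (t (σ k))⁻¹ else 1))]
        rw [← Finset.prod_mul_distrib]
        refine Finset.prod_congr rfl fun j _ => ?_
        rw [prod_ite_const' (fun k => j < k ∧ σ k < σ j) (t (σ j))]
        rw [show (∏ k, if k < j ∧ σ j < σ k then (t (σ j))⁻¹ else 1)
            = (t (σ j))⁻¹ ^ (Finset.univ.filter (fun k => k < j ∧ σ j < σ k)).card from
          prod_ite_const' _ _]
        set a := (Finset.univ.filter (fun k => j < k ∧ σ k < σ j)).card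
        set b := (Finset.univ.filter (fun k => k < j ∧ σ j < σ k)).card
        have hab := card_inv_count σ j
        rw [inv_pow, ← zpow_natCast (t (σ j)) a, ← zpow_natCast (t (σ j)) b, ← zpow_neg,
          ← zpow_add₀ (ht (σ j))]
        congr 1
        omega


/-- The Grothendieck polynomial of the Grassmannian variety,
`G_λ(z;β) = det( z_j^{λ_k+N−k} (1+βz_j)^{k−1} ) / ∏_{j<k} (z_j − z_k)`
(indices `j,k` are `1`-based in the formula; here `k : Fin N` stands for `k+1`). -/
def Groth (N : ℕ) (β : ℂ) (lam : Fin N → ℕ) (z : Fin N → ℂ) : ℂ :=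
  Matrix.det (Matrix.of fun j k : Fin N =>
      z j ^ (lam k + (N - 1 - (k : ℕ))) * (1 + β * z j) ^ (k : ℕ))
    / ∏ j : Fin N, ∏ k : Fin N, if j < k then z j - z k else 1

/-- The permutation-sum expression reduces to the `β`-Grothendieck
polynomial. Positions are `1`-indexed: `x_j` in the formula is `(x j : ℕ) + 1`, the
partition is `λ_j = x_{N−j+1} − N + j − 1` and `z_j = −β⁻¹ − u_j⁻²`. -/
theorem beta_grothendieck_reduction (β : ℂ) (hβ : β ≠ 0)
    (M N : ℕ) (hN : 1 ≤ N) (hMN : N ≤ M)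
    (u : Fin N → ℂ) (hu0 : ∀ j, u j ≠ 0)
    (hsq : ∀ j k, j ≠ k → (u j) ^ 2 ≠ (u k) ^ 2)
    (hβu : ∀ j, (u j) ^ 2 ≠ -β)
    (x : Fin N → Fin M) (hx : StrictMono x) :
    (∏ j, (u j) ^ M / (-β⁻¹ * u j - (u j)⁻¹))
      * (∏ j, ∏ k, if j < k then
          (-(((u j)⁻¹) ^ 2 * (u k) ^ 2)) / (1 - ((u j)⁻¹) ^ 2 * (u k) ^ 2) else 1)
      * ∑ σ : Equiv.Perm (Fin N),
          (∏ j, ∏ k, if j < k ∧ σ k < σ j then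
              (-((u (σ j)) ^ 2 * ((u (σ k))⁻¹) ^ 2))⁻¹ else 1)
          * ∏ j, ((-β⁻¹ * u (σ j) - (u (σ j))⁻¹) / u (σ j)) ^ ((x j : ℕ) + 1)
    = ((-β) ^ (N * (N - 1) / 2))⁻¹ * (∏ j, (u j) ^ (M - 1))
        * Groth N β (fun j => (x (Fin.rev j) : ℕ) + 1 + (j : ℕ) - N)
            (fun j => -β⁻¹ - ((u j)⁻¹) ^ 2) := by
  classical
  set t : Fin N → ℂ := fun j => ((u j)⁻¹) ^ 2 with htdef
  set z : Fin N → ℂ := fun j => -β⁻¹ - t j with hzdef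
  have hfold : ∀ j : Fin N, ((u j)⁻¹) ^ 2 = t j := fun _ => rfl
  have hzj : ∀ j : Fin N, -β⁻¹ - t j = z j := fun _ => rfl
  have ht : ∀ j, t j ≠ 0 := fun j => pow_ne_zero _ (inv_ne_zero (hu0 j))
  have htinv : ∀ j, t j = ((u j) ^ 2)⁻¹ := fun j => by
    simp only [htdef, inv_pow]
  have hut : ∀ j, u j ^ 2 * t j = 1 := fun j => by
    rw [htinv]; exact mul_inv_cancel₀ (pow_ne_zero _ (hu0 j))
  have hz0 : ∀ j, z j ≠ 0 := by
    intro j h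
    apply hβu j
    have h1 : t j = -β⁻¹ := by
      have h2 : -β⁻¹ - t j = 0 := h
      linear_combination -h2
    rw [htinv] at h1
    calc u j ^ 2 = ((u j ^ 2)⁻¹)⁻¹ := (inv_inv _).symm
      _ = (-β⁻¹)⁻¹ := by rw [h1]
      _ = -β := by rw [inv_neg, inv_inv]
  have hzd : ∀ j k, j ≠ k → z j - z k ≠ 0 := by
    intro j k hjk h
    apply hsq k j (Ne.symm hjk)
    have h1 : t k = t j := by
      have h2 : -β⁻¹ - t j - (-β⁻¹ - t k) = 0 := h
      linear_combination h2
    rw [htinv, htinv] at h1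
    calc u k ^ 2 = ((u k ^ 2)⁻¹)⁻¹ := (inv_inv _).symm
      _ = ((u j ^ 2)⁻¹)⁻¹ := by rw [h1]
      _ = u j ^ 2 := inv_inv _
  have hβz : ∀ j, 1 + β * z j = -β * t j := by
    intro j
    simp only [hzdef]
    field_simp
    ring
  have hdiv : ∀ p, (-β⁻¹ * u p - (u p)⁻¹) / u p = z p := by
    intro p
    rw [div_eq_iff (hu0 p)]
    simp only [hzdef, htdef]
    have h1 : u p * (u p)⁻¹ = 1 := mul_inv_cancel₀ (hu0 p)
    linear_combination ((u p)⁻¹) * h1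
  set B : Matrix (Fin N) (Fin N) ℂ :=
    Matrix.of (fun p k : Fin N => t p ^ (N - 1 - (k : ℕ)) * z p ^ ((x k : ℕ))) with hBdef
  set K : ℂ := ∏ p, (z p * t p ^ (((p : ℕ) : ℤ) - ((N : ℤ) - 1))) with hKdef
  set U : ℂ := ∏ j, (u j) ^ (M - 1) with hUdef
  set Zi : ℂ := ∏ j, (z j)⁻¹ with hZidef
  set D : ℂ := ∏ j : Fin N, ∏ k : Fin N, (if j < k then z j - z k else 1) with hDdef
  set Sc : ℂ := ∏ j : Fin N, ∏ k : Fin N, (if j < k then (-1 : ℂ) else 1) with hScdef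
  set P2 : ℂ := ∏ j : Fin N, ∏ k : Fin N,
      (if j < k then (-(t j)) / (z j - z k) else 1) with hP2def
  set E : ℕ := N * (N - 1) / 2 with hEdef
  -- Step P1
  have hP1 : (∏ j, (u j) ^ M / (-β⁻¹ * u j - (u j)⁻¹)) = U * Zi := by
    rw [hUdef, hZidef, ← Finset.prod_mul_distrib]
    refine Finset.prod_congr rfl fun j _ => ?_
    have hne : u j * z j ≠ 0 := mul_ne_zero (hu0 j) (hz0 j)
    have hM : -β⁻¹ * u j - (u j)⁻¹ = u j * z j := by
      have h3 := hdiv j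
      rw [div_eq_iff (hu0 j)] at h3
      linear_combination h3
    rw [hM, div_eq_iff hne]
    have h1 : (z j)⁻¹ * z j = 1 := inv_mul_cancel₀ (hz0 j)
    have h2 : u j ^ M = u j ^ (M - 1) * u j := by
      rw [← pow_succ]; congr 1; omega
    rw [h2]
    linear_combination (-(u j ^ (M - 1) * u j)) * h1
  -- Step P2
  have hP2 : (∏ j, ∏ k, if j < k then
          (-((t j) * (u k) ^ 2)) / (1 - (t j) * (u k) ^ 2) else 1) = P2 := by
    rw [hP2def]
    refine Finset.prod_congr rfl fun j _ => Finset.prod_congr rfl fun k _ => ?_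
    by_cases hjk : j < k
    · simp only [hjk, if_true]
      have h1 := hut k
      have hden : 1 - t j * u k ^ 2 = u k ^ 2 * (z j - z k) := by
        simp only [hzdef]
        linear_combination -h1
      have hne1 : 1 - t j * u k ^ 2 ≠ 0 := by
        rw [hden]
        exact mul_ne_zero (pow_ne_zero _ (hu0 k)) (hzd j k (ne_of_lt hjk))
      rw [div_eq_div_iff hne1 (hzd j k (ne_of_lt hjk))]
      simp only [hzdef]
      linear_combination (-(t j)) * h1
    · simp [hjk]
  -- the sum equals K * det B
  have hSum : (∑ σ : Equiv.Perm (Fin N),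
          (∏ j, ∏ k, if j < k ∧ σ k < σ j then
              (-((u (σ j)) ^ 2 * (t (σ k))))⁻¹ else 1)
          * ∏ j, ((-β⁻¹ * u (σ j) - (u (σ j))⁻¹) / u (σ j)) ^ ((x j : ℕ) + 1))
      = K * B.det := by
    have hc : ∀ p q, (-((u p) ^ 2 * (t q)))⁻¹ = -1 * (t p * (t q)⁻¹) := by
      intro p q
      rw [inv_neg, mul_inv, htinv p]
      ring
    have hterm : ∀ σ : Equiv.Perm (Fin N),
        (∏ j, ∏ k, if j < k ∧ σ k < σ j then (-((u (σ j)) ^ 2 * (t (σ k))))⁻¹ else 1)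
          = ((Equiv.Perm.sign σ : ℤ) : ℂ)
            * ∏ j, t (σ j) ^ (((σ j : ℕ) : ℤ) - ((j : ℕ) : ℤ)) :=
      fun σ => inv_prod_eq σ t ht (fun p q => (-((u p) ^ 2 * (t q)))⁻¹) hc
    rw [Matrix.det_apply, Finset.mul_sum]
    refine Finset.sum_congr rfl fun σ _ => ?_
    rw [hterm σ]
    have hzz : (∏ j, ((-β⁻¹ * u (σ j) - (u (σ j))⁻¹) / u (σ j)) ^ ((x j : ℕ) + 1))
        = ∏ j, (z (σ j)) ^ ((x j : ℕ) + 1) :=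
      Finset.prod_congr rfl fun j _ => by rw [hdiv]
    rw [hzz]
    have hmain : (∏ j, t (σ j) ^ (((σ j : ℕ) : ℤ) - ((j : ℕ) : ℤ)))
        * (∏ j, (z (σ j)) ^ ((x j : ℕ) + 1)) = K * ∏ j, B (σ j) j := by
      rw [← Finset.prod_mul_distrib]
      have hK2 : K = ∏ j, (z (σ j) * t (σ j) ^ (((σ j : ℕ) : ℤ) - ((N : ℤ) - 1))) := by
        rw [hKdef]
        exact (Equiv.prod_comp σ fun p => z p * t p ^ (((p : ℕ) : ℤ) - ((N : ℤ) - 1))).symm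
      rw [hK2, ← Finset.prod_mul_distrib]
      refine Finset.prod_congr rfl fun j _ => ?_
      simp only [hBdef, Matrix.of_apply]
      have hsplit : (((σ j : ℕ) : ℤ) - ((j : ℕ) : ℤ))
          = ((((σ j : ℕ) : ℤ) - ((N : ℤ) - 1)) + ((N : ℤ) - 1 - ((j : ℕ) : ℤ))) := by ring
      rw [hsplit, zpow_add₀ (ht (σ j))]
      have hnat : ((N : ℤ) - 1 - ((j : ℕ) : ℤ)) = ((N - 1 - (j : ℕ) : ℕ) : ℤ) := by
        have := j.2; push_cast; omega
      rw [hnat, zpow_natCast, pow_succ]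
      ring
    rw [mul_assoc, hmain, Units.smul_def, zsmul_eq_mul]
    ring
  -- Groth side
  have hrevval : ∀ k : Fin N, (Fin.rev k : ℕ) = N - 1 - (k : ℕ) := by
    intro k; rw [Fin.val_rev]; omega
  have hge : ∀ m : ℕ, ∀ j : Fin N, (j : ℕ) = m → m ≤ (x j : ℕ) := by
    intro m
    induction m with
    | zero => intro j _; exact Nat.zero_le _
    | succ i ih =>
      intro j hj
      have hiN : i < N := by have := j.2; omega
      have hlt : (⟨i, hiN⟩ : Fin N) < j := by
        simp only [Fin.lt_def]; omega
      have h1 := hx hlt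
      have h2 := ih ⟨i, hiN⟩ rfl
      have h3 : (x ⟨i, hiN⟩ : ℕ) < (x j : ℕ) := h1
      omega
  have hgej : ∀ j : Fin N, (j : ℕ) ≤ (x j : ℕ) := fun j => hge (j : ℕ) j rfl
  set Bv : Matrix (Fin N) (Fin N) ℂ :=
    Matrix.of (fun j k : Fin N => (-β) ^ (N - 1 - (k : ℕ)) * B j k) with hBvdef
  have hW : ((-β) ^ E) ≠ 0 := pow_ne_zero _ (neg_ne_zero.mpr hβ)
  have hprodW : (∏ k : Fin N, (-β) ^ (N - 1 - (k : ℕ))) = (-β) ^ E := by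
    rw [Finset.prod_pow_eq_pow_sum]
    congr 1
    rw [Fin.sum_univ_eq_sum_range (fun i => N - 1 - i)]
    have h5 := Finset.sum_range_reflect (fun i => i) N
    rw [hEdef, ← Finset.sum_range_id, ← h5]
  have hSc : ((Equiv.Perm.sign (Fin.revPerm : Equiv.Perm (Fin N)) : ℤ) : ℂ) = Sc := by
    rw [← sign_as_prod (Fin.revPerm : Equiv.Perm (Fin N)), hScdef]
    refine Finset.prod_congr rfl fun j _ => Finset.prod_congr rfl fun k _ => ?_
    congr 1
    simp only [Fin.revPerm_apply, eq_iff_iff]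
    constructor
    · exact fun h => h.1
    · intro h; exact ⟨h, by rwa [Fin.rev_lt_rev]⟩
  have hGroth : Groth N β (fun j => (x (Fin.rev j) : ℕ) + 1 + (j : ℕ) - N)
            (fun j => -β⁻¹ - ((u j)⁻¹) ^ 2)
      = (Sc * ((-β) ^ E * B.det)) / D := by
    rw [Groth]
    simp only [hfold, hzj]
    have hnum : (Matrix.of fun j k : Fin N =>
        z j ^ (((x (Fin.rev k) : ℕ) + 1 + (k : ℕ) - N) + (N - 1 - (k : ℕ)))
          * (1 + β * z j) ^ (k : ℕ))
        = Bv.submatrix id Fin.revPerm := by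
      ext j k
      simp only [Matrix.of_apply, Matrix.submatrix_apply, id_eq, Fin.revPerm_apply, hBvdef, hBdef]
      have he1 : ((x (Fin.rev k) : ℕ) + 1 + (k : ℕ) - N) + (N - 1 - (k : ℕ))
          = (x (Fin.rev k) : ℕ) := by
        have h1 := hgej (Fin.rev k)
        have h2 := hrevval k
        have h3 := k.2
        omega
      have he2 : (N - 1 - ((Fin.rev k : Fin N) : ℕ)) = (k : ℕ) := by
        rw [hrevval k]; have := k.2; omega
      rw [he1, he2, hβz j, mul_pow]
      ring
    rw [hnum, Matrix.det_permute', hBvdef]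
    rw [show (Matrix.of fun j k : Fin N => (-β) ^ (N - 1 - (k : ℕ)) * B j k).det
        = (∏ k : Fin N, (-β) ^ (N - 1 - (k : ℕ))) * B.det from
      Matrix.det_mul_row (fun k : Fin N => (-β) ^ (N - 1 - (k : ℕ))) B]
    rw [hprodW, ← hSc]
  have hDne : D ≠ 0 := by
    rw [hDdef, Finset.prod_ne_zero_iff]
    intro j _
    rw [Finset.prod_ne_zero_iff]
    intro k _
    by_cases hjk : j < k
    · simpa [hjk] using hzd j k (ne_of_lt hjk)
    · simp [hjk]
  -- scalar core identity
  have hcore : Zi * P2 * K * D = Sc := by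
    have ha : P2 * D = ∏ j : Fin N, ∏ k : Fin N, (if j < k then -(t j) else 1) := by
      rw [hP2def, hDdef, ← Finset.prod_mul_distrib]
      refine Finset.prod_congr rfl fun j _ => ?_
      rw [← Finset.prod_mul_distrib]
      refine Finset.prod_congr rfl fun k _ => ?_
      by_cases hjk : j < k
      · simp only [hjk, if_true]
        exact div_mul_cancel₀ _ (hzd j k (ne_of_lt hjk))
      · simp [hjk]
    have hb : (∏ j : Fin N, ∏ k : Fin N, (if j < k then -(t j) else 1))
        = Sc * ∏ j : Fin N, (t j) ^ (N - 1 - (j : ℕ)) := by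
      rw [hScdef, ← Finset.prod_mul_distrib]
      refine Finset.prod_congr rfl fun j _ => ?_
      calc (∏ k : Fin N, if j < k then -(t j) else 1)
          = ∏ k : Fin N, ((if j < k then (-1 : ℂ) else 1) * (if j < k then t j else 1)) :=
            Finset.prod_congr rfl fun k _ => by by_cases hjk : j < k <;> simp [hjk]
        _ = (∏ k : Fin N, if j < k then (-1 : ℂ) else 1)
              * ∏ k : Fin N, (if j < k then t j else 1) := Finset.prod_mul_distrib
        _ = (∏ k : Fin N, if j < k then (-1 : ℂ) else 1) * (t j) ^ (N - 1 - (j : ℕ)) := by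
            rw [prod_ite_const' (fun k => j < k) (t j)]
            congr 2
            have h6 : Finset.univ.filter (fun k : Fin N => j < k) = Finset.Ioi j := by
              ext m; simp
            rw [h6, Fin.card_Ioi]
    have hc2 : Zi * K = ∏ j, t j ^ (((j : ℕ) : ℤ) - ((N : ℤ) - 1)) := by
      rw [hZidef, hKdef, ← Finset.prod_mul_distrib]
      exact Finset.prod_congr rfl fun j _ => inv_mul_cancel_left₀ (hz0 j) _
    have hd : (∏ j, t j ^ (((j : ℕ) : ℤ) - ((N : ℤ) - 1)))
        * (∏ j : Fin N, (t j) ^ (N - 1 - (j : ℕ))) = 1 := by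
      rw [← Finset.prod_mul_distrib]
      apply Finset.prod_eq_one
      intro j _
      rw [← zpow_natCast (t j) (N - 1 - (j : ℕ)), ← zpow_add₀ (ht j)]
      rw [show (((j : ℕ) : ℤ) - ((N : ℤ) - 1)) + ((N - 1 - (j : ℕ) : ℕ) : ℤ) = 0 from by
        have := j.2; push_cast; omega]
      exact zpow_zero _
    calc Zi * P2 * K * D = (Zi * K) * (P2 * D) := by ring
      _ = (∏ j, t j ^ (((j : ℕ) : ℤ) - ((N : ℤ) - 1)))
            * (Sc * ∏ j : Fin N, (t j) ^ (N - 1 - (j : ℕ))) := by rw [hc2, ha, hb]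
      _ = Sc * ((∏ j, t j ^ (((j : ℕ) : ℤ) - ((N : ℤ) - 1)))
            * (∏ j : Fin N, (t j) ^ (N - 1 - (j : ℕ)))) := by ring
      _ = Sc := by rw [hd, mul_one]
  -- assembly
  simp only [hfold]
  rw [hP1, hP2, hSum, hGroth]
  have hfin : Zi * P2 * K = Sc / D := by
    rw [eq_div_iff hDne]
    linear_combination hcore
  calc U * Zi * P2 * (K * B.det) = (Zi * P2 * K) * (U * B.det) := by ring
    _ = (Sc / D) * (U * B.det) := by rw [hfin]
    _ = ((-β) ^ E)⁻¹ * U * ((Sc * ((-β) ^ E * B.det)) / D) := by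
        field_simp
end
end

section
/- Let β ∈ ℂ, N ≥ 1, L ≥ 0, and let z₁,…,z_N and w₁,…,w_N be complex numbers such that the z_j are pairwise distinct, the w_j are pairwise distinct, and z_j ≠ w_k for all j,k. Then the Cauchy identity for Grothendieck polynomials holds: Σ_{λ ⊆ L^N} G_λ(z;β) G_{λ∨}(w;β) = ∏_{1≤j<k≤N} [ (z_j−z_k)(w_k−w_j) ]⁻¹ · det_{1≤j,k≤N} [ ( z_j^{L+N}(1+βw_k)^{N−1} − w_k^{L+N}(1+βz_j)^{N−1} ) / (z_j − w_k) ], where the sum runs over all partitions λ = (λ₁,…,λ_N) with L ≥ λ₁ ≥ ⋯ ≥ λ_N ≥ 0, and λ∨_j = L − λ_{N+1−j}. -/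
/-!
Put `e_k = λ_k + N - 1 - k`: partitions `λ ⊆ L^N` become strictly decreasing tuples
`m > e_0 > ⋯ > e_{N-1} ≥ 0` with `m = L + N`. After reversing the columns of the dual
determinant and clearing the Vandermonde denominators, the identity reads
`∑_e det(z_j^{e_k} (1+βz_j)^k) · det(w_j^{m-1-e_k} (1+βw_j)^{N-1-k}) = det C_m`,
where `C_m` is the kernel on the right-hand side.

Both sides satisfy the same recursion in `(N, m)`. On the left, the tuples with `e_0 < m - 1`
give `∏ w_k` times the sum for `m - 1`, and those with `e_0 = m - 1` are expanded along the
first column of both determinants. On the right, `C_m = C_{m-1} · diag(w) + u vᵀ` with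
`u_j = z_j^{m-1}`, so `det C_m = ∏ w_k · det C_{m-1} + vᵀ adj(C_{m-1} · diag(w)) u`. Raising
the exponent of `1 + β ·` in the kernel multiplies it by `diag(1 + βz)` up to a rank-one term
with the same column `u`, which does not change `vᵀ adj(·) u`; hence the cofactors that occur
are those of the kernel of size `N - 1`. For `m = 0` there are no tuples, and the kernel
factors through an `(N - 1)`-dimensional space.
-/

noncomputable section

open Matrix Finset

namespace Matrix

section

variable {n R : Type*} [Fintype n] [DecidableEq n] [CommRing R]

theorem det_add_vecMulVec (A : Matrix n n R) (u v : n → R) :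
    (A + vecMulVec u v).det = A.det + v ⬝ᵥ (adjugate A *ᵥ u) := by
  have rows : ∀ s : Finset n, (A + of fun i j => if i ∈ s then u i * v j else 0).det
      = A.det + ∑ i ∈ s, u i * (A.updateRow i v).det := by
    intro s
    induction s using Finset.induction_on with
    | empty =>
      simp only [notMem_empty, if_false, sum_empty, add_zero]
      exact congrArg det (add_zero A)
    | insert i s hi ih =>
      set M := A + of fun i j => if i ∈ s then u i * v j else 0
      have hM : A + (of fun p q => if p ∈ insert i s then u p * v q else 0)
          = M.updateRow i (M i + u i • v) := by
        ext p q
        by_cases hp : p = i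
        · subst hp; simp [M, hi]
        · simp [M, hp]
      -- the rows of `M` other than `i` differ from those of `A` by multiples of `v`
      have hvi : (M.updateRow i v).det = (A.updateRow i v).det := by
        refine det_eq_of_forall_row_eq_smul_add_const (fun p => if p ∈ s then u p else 0) i
          (by simp [hi]) fun p q => ?_
        by_cases hp : p = i
        · subst hp; simp [hi]
        · by_cases hs : p ∈ s <;> simp [M, hp, hs]
      rw [hM, det_updateRow_add, det_updateRow_smul, updateRow_eq_self, hvi, ih, sum_insert hi]
      ring
  have hall := rows univ
  simp only [mem_univ, if_true] at hall
  rw [show vecMulVec u v = of fun i j => u i * v j from rfl, hall, dotProduct_mulVec,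
    dotProduct_comm, dotProduct, ← mulVec_transpose, adjugate_transpose,
    ← cramer_eq_adjugate_mulVec]
  simp only [cramer_transpose_apply]

theorem dotProduct_adjugate_add_vecMulVec_mulVec (A : Matrix n n R) (u v v' : n → R) :
    v ⬝ᵥ (adjugate (A + vecMulVec u v') *ᵥ u) = v ⬝ᵥ (adjugate A *ᵥ u) := by
  have h := det_add_vecMulVec (A + vecMulVec u v') u v
  rw [add_assoc, ← vecMulVec_add, det_add_vecMulVec, det_add_vecMulVec, add_dotProduct] at h
  linear_combination -h

end

theorem adjugate_diagonal_mul_mul_diagonal_apply {R : Type*} [CommRing R] {N : ℕ}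
    (a b : Fin (N + 1) → R) (M : Matrix (Fin (N + 1)) (Fin (N + 1)) R) (k j : Fin (N + 1)) :
    adjugate (diagonal a * M * diagonal b) k j = (-1) ^ ((j : ℕ) + (k : ℕ))
      * ((∏ p, a (j.succAbove p)) * (∏ q, b (k.succAbove q))
        * (M.submatrix j.succAbove k.succAbove).det) := by
  have hminor : (diagonal a * M * diagonal b).submatrix j.succAbove k.succAbove
      = diagonal (a ∘ j.succAbove) * M.submatrix j.succAbove k.succAbove
        * diagonal (b ∘ k.succAbove) := by
    ext p q
    simp [diagonal_mul, mul_diagonal]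
  rw [adjugate_fin_succ_eq_det_submatrix, hminor, det_mul, det_mul, det_diagonal, det_diagonal]
  simp only [Function.comp_apply]
  ring

end Matrix

section Vandermonde

variable {R : Type*} [CommRing R] {N : ℕ}

theorem det_vandermonde_eq_prod_ite (v : Fin N → R) :
    (vandermonde v).det = ∏ j, ∏ k, if j < k then v k - v j else 1 := by
  rw [det_vandermonde]
  refine prod_congr rfl fun j _ => ?_
  rw [← filter_lt_eq_Ioi, prod_filter]

theorem prod_ite_sub_eq_sign_revPerm_mul (v : Fin N → R) :
    (∏ j, ∏ k, if j < k then v j - v k else 1)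
      = Equiv.Perm.sign (Fin.revPerm : Equiv.Perm (Fin N))
        * ∏ j, ∏ k, if j < k then v k - v j else 1 := by
  have hrev : (vandermonde v).submatrix Fin.revPerm id = vandermonde (v ∘ Fin.rev) := by
    ext j k
    simp [vandermonde_apply]
  rw [← det_vandermonde_eq_prod_ite, ← det_permute, hrev, det_vandermonde_eq_prod_ite]
  refine prod_comm.trans (Fintype.prod_equiv Fin.revPerm _ _ fun k =>
    Fintype.prod_equiv Fin.revPerm _ _ fun j => ?_)
  simp [Fin.rev_lt_rev]

end Vandermonde

section StrictAntiTuples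

def strictAntiTuples (N m : ℕ) : Finset (Fin N → ℕ) :=
  (Fintype.piFinset fun _ => range m).filter fun e => ∀ j k, j < k → e k < e j

theorem mem_strictAntiTuples {N m : ℕ} {e : Fin N → ℕ} :
    e ∈ strictAntiTuples N m ↔ (∀ k, e k < m) ∧ StrictAnti e := by
  simp [strictAntiTuples, StrictAnti]

theorem sum_strictAntiTuples_succ {M : Type*} [AddCommMonoid M] (N m : ℕ)
    (g : (Fin (N + 1) → ℕ) → M) :
    ∑ e ∈ strictAntiTuples (N + 1) (m + 1), g e
      = ∑ e ∈ strictAntiTuples (N + 1) m, g e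
        + ∑ e ∈ strictAntiTuples N m, g (Fin.cons m e) := by
  set cons : (Fin N → ℕ) ↪ (Fin (N + 1) → ℕ) :=
    ⟨Fin.cons (α := fun _ => ℕ) m, Fin.cons_right_injective (α := fun _ => ℕ) m⟩
  have hsplit : strictAntiTuples (N + 1) (m + 1)
      = strictAntiTuples (N + 1) m ∪ (strictAntiTuples N m).map cons := by
    ext e
    simp only [mem_union, mem_map, mem_strictAntiTuples, cons, Function.Embedding.coeFn_mk]
    constructor
    · rintro ⟨hlt, hanti⟩
      rcases (Nat.lt_succ_iff.mp (hlt 0)).lt_or_eq with h0 | h0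
      · exact Or.inl ⟨fun k => (hanti.antitone (Fin.zero_le k)).trans_lt h0, hanti⟩
      · refine Or.inr ⟨Fin.tail e, ⟨fun k => h0 ▸ hanti (Fin.succ_pos k),
          hanti.comp_strictMono Fin.strictMono_succ⟩, ?_⟩
        rw [← h0, Fin.cons_self_tail]
    · rintro (⟨hlt, hanti⟩ | ⟨e', ⟨hlt, hanti⟩, rfl⟩)
      · exact ⟨fun k => (hlt k).trans (Nat.lt_succ_self m), hanti⟩
      · refine ⟨Fin.cases (Nat.lt_succ_self m) fun k => (hlt k).trans (Nat.lt_succ_self m), ?_⟩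
        exact (Fin.liftFun_cons (· > ·)).mpr ⟨hlt, hanti⟩
  have hdisj : Disjoint (strictAntiTuples (N + 1) m) ((strictAntiTuples N m).map cons) := by
    simp only [disjoint_left, mem_map, mem_strictAntiTuples, cons, Function.Embedding.coeFn_mk]
    rintro e ⟨hlt, -⟩ ⟨e', -, rfl⟩
    simpa using hlt 0
  rw [hsplit, sum_union hdisj, sum_map]
  rfl

theorem strictAnti_iff_antitone_add_val {N : ℕ} (e : Fin N → ℕ) :
    StrictAnti e ↔ Antitone fun k => e k + k := by
  cases N with
  | zero => exact iff_of_true (Subsingleton.strictAnti e) (Subsingleton.antitone _)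
  | succ n =>
    rw [Fin.strictAnti_iff_succ_lt, Fin.antitone_iff_succ_le]
    refine forall_congr' fun i => ?_
    simp only [Fin.val_succ, Fin.val_castSucc]
    omega

theorem add_val_mem_Ico_of_mem_strictAntiTuples {N m : ℕ} {e : Fin N → ℕ}
    (he : e ∈ strictAntiTuples N m) (k : Fin N) : e k + k ∈ Set.Ico (N - 1) m := by
  obtain ⟨hlt, hanti⟩ := mem_strictAntiTuples.mp he
  have hmono := (strictAnti_iff_antitone_add_val e).mp hanti
  obtain ⟨n, rfl⟩ : ∃ n, N = n + 1 := ⟨N - 1, by have := k.pos; omega⟩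
  have hlast := hmono (Fin.le_last k)
  have hfirst := hmono (Fin.zero_le k)
  have h0 := hlt 0
  simp only [Fin.val_last, Fin.val_zero] at hlast hfirst h0
  exact ⟨by omega, by omega⟩

theorem sum_antitone_eq_sum_strictAntiTuples {M : Type*} [AddCommMonoid M] (N L : ℕ)
    (g : (Fin N → ℕ) → M) :
    ∑ f ∈ univ.filter
        (fun f : Fin N → Fin (L + 1) => ∀ j k : Fin N, j ≤ k → f k ≤ f j),
      g (fun k => f k + (N - 1 - k)) = ∑ e ∈ strictAntiTuples N (L + N), g e := by
  refine sum_nbij' (fun f k => f k + (N - 1 - k))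
    (fun e k => Fin.ofNat (L + 1) (e k - (N - 1 - k))) ?_ ?_ ?_ ?_ fun _ _ => rfl
  · intro f hf
    refine mem_strictAntiTuples.mpr ⟨fun k => by have := (f k).isLt; omega, ?_⟩
    refine (strictAnti_iff_antitone_add_val _).mpr fun j k hjk => ?_
    have hf' := (mem_filter.mp hf).2 j k hjk
    simp only [Fin.le_def] at hjk hf' ⊢
    omega
  · intro e he
    refine mem_filter.mpr ⟨mem_univ _, fun j k hjk => ?_⟩
    have hmono := (strictAnti_iff_antitone_add_val e).mp (mem_strictAntiTuples.mp he).2 hjk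
    have hj := Set.mem_Ico.mp (add_val_mem_Ico_of_mem_strictAntiTuples he j)
    have hk := Set.mem_Ico.mp (add_val_mem_Ico_of_mem_strictAntiTuples he k)
    simp only [Fin.le_def, Fin.val_ofNat] at hjk hmono ⊢
    rw [Nat.mod_eq_of_lt (by omega), Nat.mod_eq_of_lt (by omega)]
    omega
  · intro f _
    funext k
    simp
  · intro e he
    funext k
    have hk := Set.mem_Ico.mp (add_val_mem_Ico_of_mem_strictAntiTuples he k)
    simp only [Fin.val_ofNat]
    rw [Nat.mod_eq_of_lt (by omega)]
    omega

end StrictAntiTuples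

section CauchySum

variable {R : Type*} [CommRing R] (β : R)

def minorSum (N m : ℕ) (F : (Fin N → R) → (Fin N → R) → R) (z w : Fin (N + 1) → R) :
    R :=
  ∑ j : Fin (N + 1), ∑ k : Fin (N + 1),
    (-1) ^ ((j : ℕ) + (k : ℕ)) * z j ^ m * (1 + β * w k) ^ N
      * (∏ p, (1 + β * z (j.succAbove p))) * (∏ q, w (k.succAbove q))
      * F (z ∘ j.succAbove) (w ∘ k.succAbove)

def grothMatrix {N : ℕ} (e : Fin N → ℕ) (z : Fin N → R) : Matrix (Fin N) (Fin N) R :=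
  of fun j k => z j ^ e k * (1 + β * z j) ^ (k : ℕ)

def dualGrothMatrix {N : ℕ} (m : ℕ) (e : Fin N → ℕ) (w : Fin N → R) :
    Matrix (Fin N) (Fin N) R :=
  of fun j k => w j ^ (m - 1 - e k) * (1 + β * w j) ^ (N - 1 - k)

def cauchySum (N m : ℕ) (z w : Fin N → R) : R :=
  ∑ e ∈ strictAntiTuples N m, (grothMatrix β e z).det * (dualGrothMatrix β m e w).det

theorem det_grothMatrix_cons {N m : ℕ} (e : Fin N → ℕ) (z : Fin (N + 1) → R) :
    (grothMatrix β (Fin.cons m e) z).det = ∑ j : Fin (N + 1), (-1) ^ (j : ℕ) * z j ^ m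
      * ((∏ p, (1 + β * z (j.succAbove p))) * (grothMatrix β e (z ∘ j.succAbove)).det) := by
  rw [det_succ_column_zero]
  refine sum_congr rfl fun j _ => ?_
  have hminor : (grothMatrix β (Fin.cons m e) z).submatrix j.succAbove Fin.succ
      = diagonal (fun p => 1 + β * z (j.succAbove p)) * grothMatrix β e (z ∘ j.succAbove) := by
    ext p q
    simp [grothMatrix, diagonal_mul, pow_succ]
    ring
  rw [hminor, det_mul, det_diagonal]
  simp [grothMatrix]

theorem det_dualGrothMatrix_cons {N m : ℕ} (e : Fin N → ℕ) (he : ∀ k, e k < m)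
    (w : Fin (N + 1) → R) :
    (dualGrothMatrix β (m + 1) (Fin.cons m e) w).det
      = ∑ k : Fin (N + 1), (-1) ^ (k : ℕ) * (1 + β * w k) ^ N
        * ((∏ q, w (k.succAbove q)) * (dualGrothMatrix β m e (w ∘ k.succAbove)).det) := by
  rw [det_succ_column_zero]
  refine sum_congr rfl fun k _ => ?_
  have hminor : (dualGrothMatrix β (m + 1) (Fin.cons m e) w).submatrix k.succAbove Fin.succ
      = diagonal (w ∘ k.succAbove) * dualGrothMatrix β m e (w ∘ k.succAbove) := by
    ext p q
    have hexp : m + 1 - 1 - e q = m - 1 - e q + 1 := by have := he q; omega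
    have hdeg : N + 1 - 1 - (q + 1 : ℕ) = N - 1 - q := by omega
    simp only [dualGrothMatrix, submatrix_apply, of_apply, Fin.cons_succ, Fin.val_succ,
      diagonal_mul, Function.comp_apply, hexp, hdeg, pow_succ]
    ring
  rw [hminor, det_mul, det_diagonal]
  simp [dualGrothMatrix]

theorem det_dualGrothMatrix_succ {N m : ℕ} (e : Fin N → ℕ) (he : ∀ k, e k < m)
    (w : Fin N → R) :
    (dualGrothMatrix β (m + 1) e w).det = (∏ j, w j) * (dualGrothMatrix β m e w).det := by
  rw [← det_diagonal, ← det_mul]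
  congr 1
  ext j k
  have hexp : m - e k = m - 1 - e k + 1 := by have := he k; omega
  simp [dualGrothMatrix, diagonal_mul, hexp, pow_succ]
  ring

theorem cauchySum_zero_left (m : ℕ) (z w : Fin 0 → R) : cauchySum β 0 m z w = 1 := by
  simp [cauchySum, strictAntiTuples]

theorem cauchySum_succ_zero (N : ℕ) (z w : Fin (N + 1) → R) :
    cauchySum β (N + 1) 0 z w = 0 := by
  simp [cauchySum, strictAntiTuples]

theorem cauchySum_succ_succ (N m : ℕ) (z w : Fin (N + 1) → R) :
    cauchySum β (N + 1) (m + 1) z w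
      = (∏ k, w k) * cauchySum β (N + 1) m z w + minorSum β N m (cauchySum β N m) z w := by
  rw [cauchySum, sum_strictAntiTuples_succ, cauchySum, mul_sum]
  congr 1
  · refine sum_congr rfl fun e he => ?_
    rw [det_dualGrothMatrix_succ β e (mem_strictAntiTuples.mp he).1]
    ring
  · have hterm : ∀ e ∈ strictAntiTuples N m,
        (grothMatrix β (Fin.cons m e) z).det * (dualGrothMatrix β (m + 1) (Fin.cons m e) w).det
          = ∑ j : Fin (N + 1), ∑ k : Fin (N + 1),
            (-1) ^ ((j : ℕ) + (k : ℕ)) * z j ^ m * (1 + β * w k) ^ N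
              * (∏ p, (1 + β * z (j.succAbove p))) * (∏ q, w (k.succAbove q))
              * ((grothMatrix β e (z ∘ j.succAbove)).det
                * (dualGrothMatrix β m e (w ∘ k.succAbove)).det) := fun e he => by
      rw [det_grothMatrix_cons, det_dualGrothMatrix_cons β e (mem_strictAntiTuples.mp he).1,
        sum_mul_sum]
      refine sum_congr rfl fun j _ => sum_congr rfl fun k _ => ?_
      ring
    rw [sum_congr rfl hterm, sum_comm, minorSum]
    refine sum_congr rfl fun j _ => ?_
    rw [sum_comm]
    refine sum_congr rfl fun k _ => ?_
    rw [cauchySum, mul_sum]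

end CauchySum

section CauchyKernel

variable {K ι : Type*} [Field K]

def cauchyKernel (β : K) (n m : ℕ) (z w : ι → K) : Matrix ι ι K :=
  of fun j k => (z j ^ m * (1 + β * w k) ^ n - w k ^ m * (1 + β * z j) ^ n) / (z j - w k)

variable (β : K) (n m : ℕ) {z w : ι → K}

theorem cauchyKernel_submatrix {κ : Type*} (f g : κ → ι) :
    (cauchyKernel β n m z w).submatrix f g = cauchyKernel β n m (z ∘ f) (w ∘ g) :=
  rfl

theorem cauchyKernel_succ_degree_apply (hzw : ∀ j k, z j ≠ w k) (j k : ι) :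
    cauchyKernel β n (m + 1) z w j k
      = cauchyKernel β n m z w j k * w k + z j ^ m * (1 + β * w k) ^ n := by
  have := sub_ne_zero.mpr (hzw j k)
  simp only [cauchyKernel, of_apply]
  field_simp
  ring

theorem cauchyKernel_succ_exponent_apply (hzw : ∀ j k, z j ≠ w k) (j k : ι) :
    cauchyKernel β (n + 1) m z w j k
      = (1 + β * z j) * cauchyKernel β n m z w j k - β * z j ^ m * (1 + β * w k) ^ n := by
  have := sub_ne_zero.mpr (hzw j k)
  simp only [cauchyKernel, of_apply]
  field_simp
  ring

theorem det_cauchyKernel_zero_degree [Fintype ι] [DecidableEq ι] (hn : n < Fintype.card ι)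
    (hzw : ∀ j k, z j ≠ w k) : (cauchyKernel β n 0 z w).det = 0 := by
  set P : Matrix ι (Fin n) K := of fun j i => -β * (1 + β * z j) ^ (i : ℕ)
  set Q : Matrix (Fin n) ι K := of fun i k => (1 + β * w k) ^ (n - 1 - i)
  have hPQ : cauchyKernel β n 0 z w = P * Q := by
    ext j k
    have := sub_ne_zero.mpr (hzw j k)
    simp only [cauchyKernel, of_apply, pow_zero, one_mul, mul_apply, P, Q, mul_assoc,
      ← mul_sum, Fin.sum_univ_eq_sum_range
        (fun i => (1 + β * z j) ^ i * (1 + β * w k) ^ (n - 1 - i))]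
    rw [div_eq_iff this]
    linear_combination geom_sum₂_mul (1 + β * z j) (1 + β * w k) n
  by_contra hdet
  have hrank := rank_of_isUnit _ ((isUnit_iff_isUnit_det _).mpr (isUnit_iff_ne_zero.mpr hdet))
  rw [hPQ] at hrank
  have := (rank_mul_le_left P Q).trans (rank_le_card_width P)
  simp only [Fintype.card_fin] at this
  omega

theorem det_cauchyKernel_succ_degree {N : ℕ} {z w : Fin (N + 1) → K}
    (hzw : ∀ j k, z j ≠ w k) :
    (cauchyKernel β N (m + 1) z w).det = (∏ k, w k) * (cauchyKernel β N m z w).det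
      + minorSum β N m (fun z' w' => (cauchyKernel β (N - 1) m z' w').det) z w := by
  have hdeg : cauchyKernel β N (m + 1) z w = cauchyKernel β N m z w * diagonal w
      + vecMulVec (fun j => z j ^ m) (fun k => (1 + β * w k) ^ N) := by
    ext j k
    simp [vecMulVec_apply, cauchyKernel_succ_degree_apply β N m hzw]
  rw [hdeg, det_add_vecMulVec, det_mul, det_diagonal, mul_comm]
  congr 1
  cases N with
  | zero => simp [minorSum, dotProduct]
  | succ n =>
    have hexp : cauchyKernel β (n + 1) m z w * diagonal w
        = diagonal (fun j => 1 + β * z j) * cauchyKernel β n m z w * diagonal w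
          + vecMulVec (fun j => z j ^ m) (fun k => -β * (1 + β * w k) ^ n * w k) := by
      ext j k
      simp [vecMulVec_apply, diagonal_mul, mul_diagonal,
        cauchyKernel_succ_exponent_apply β n m hzw]
      ring
    rw [hexp, dotProduct_adjugate_add_vecMulVec_mulVec, minorSum, sum_comm]
    refine sum_congr rfl fun k _ => ?_
    simp only [mulVec, dotProduct, mul_sum]
    refine sum_congr rfl fun j _ => ?_
    rw [adjugate_diagonal_mul_mul_diagonal_apply, cauchyKernel_submatrix, Nat.add_sub_cancel]
    ring

end CauchyKernel

theorem cauchySum_eq_det_cauchyKernel {K : Type*} [Field K] (β : K) (N m : ℕ)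
    {z w : Fin N → K} (hzw : ∀ j k, z j ≠ w k) :
    cauchySum β N m z w = (cauchyKernel β (N - 1) m z w).det := by
  induction N generalizing m with
  | zero => simp [cauchySum_zero_left]
  | succ N ihN =>
    induction m with
    | zero => rw [cauchySum_succ_zero, det_cauchyKernel_zero_degree β _ (by simp) hzw]
    | succ m ihm =>
      simp only [Nat.add_sub_cancel] at ihm ⊢
      rw [cauchySum_succ_succ, ihm, det_cauchyKernel_succ_degree β m hzw]
      congr 1
      refine sum_congr rfl fun j _ => sum_congr rfl fun k _ => ?_
      rw [ihN m (z := z ∘ j.succAbove) (w := w ∘ k.succAbove) fun p q => hzw _ _]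

theorem groth_dual_eq (β : ℂ) {N : ℕ} (L : ℕ) (f : Fin N → ℕ) (hf : ∀ k, f k ≤ L)
    (w : Fin N → ℂ) :
    Groth N β (fun j => L - f (Fin.rev j)) w
      = (dualGrothMatrix β (L + N) (fun k => f k + (N - 1 - k)) w).det
        / ∏ j, ∏ k, if j < k then w k - w j else 1 := by
  have hnum : (of fun j k : Fin N =>
        w j ^ (L - f (Fin.rev k) + (N - 1 - k)) * (1 + β * w j) ^ (k : ℕ))
      = (dualGrothMatrix β (L + N) (fun k => f k + (N - 1 - k)) w).submatrix id Fin.revPerm := by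
    ext j k
    have := hf (Fin.rev k)
    have hk := k.isLt
    simp only [dualGrothMatrix, submatrix_apply, of_apply, id, Fin.revPerm_apply, Fin.val_rev]
    congr 2 <;> omega
  have hsign : ((Equiv.Perm.sign (Fin.revPerm : Equiv.Perm (Fin N)) : ℤ) : ℂ) ≠ 0 := by
    simp
  rw [Groth, hnum, det_permute', prod_ite_sub_eq_sign_revPerm_mul, mul_div_mul_left _ _ hsign]

theorem grothendieck_cauchy_identity_general (β : ℂ) (N : ℕ) (L : ℕ)
    (z w : Fin N → ℂ)
    (hzw : ∀ j k, z j ≠ w k) :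
    ∑ f ∈ Finset.univ.filter
        (fun f : Fin N → Fin (L + 1) => ∀ j k : Fin N, j ≤ k → f k ≤ f j),
      Groth N β (fun j => (f j : ℕ)) z
        * Groth N β (fun j => L - (f (Fin.rev j) : ℕ)) w
      = (∏ j, ∏ k, if j < k then ((z j - z k) * (w k - w j))⁻¹ else 1)
        * Matrix.det (Matrix.of fun j k : Fin N =>
            ((z j) ^ (L + N) * (1 + β * w k) ^ (N - 1)
              - (w k) ^ (L + N) * (1 + β * z j) ^ (N - 1)) / (z j - w k)) := by
  set Vz := ∏ j : Fin N, ∏ k : Fin N, if j < k then z j - z k else 1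
  set Vw := ∏ j : Fin N, ∏ k : Fin N, if j < k then w k - w j else 1
  have hterm : ∀ f : Fin N → Fin (L + 1),
      Groth N β (fun j => (f j : ℕ)) z * Groth N β (fun j => L - (f (Fin.rev j) : ℕ)) w
        = (Vz * Vw)⁻¹ * ((grothMatrix β (fun k => f k + (N - 1 - k)) z).det
          * (dualGrothMatrix β (L + N) (fun k => f k + (N - 1 - k)) w).det) := fun f => by
    rw [groth_dual_eq β L (fun k => f k) (fun k => Nat.lt_succ_iff.mp (f k).isLt), Groth,
      div_mul_div_comm, div_eq_inv_mul]
    rfl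
  have hprod : (∏ j, ∏ k, if j < k then ((z j - z k) * (w k - w j))⁻¹ else 1)
      = (Vz * Vw)⁻¹ := by
    simp only [Vz, Vw, ← prod_mul_distrib, ← prod_inv_distrib]
    refine prod_congr rfl fun j _ => prod_congr rfl fun k _ => ?_
    split_ifs <;> simp
  rw [sum_congr rfl fun f _ => hterm f, ← mul_sum,
    sum_antitone_eq_sum_strictAntiTuples N L
      fun e => (grothMatrix β e z).det * (dualGrothMatrix β (L + N) e w).det,
    ← cauchySum, cauchySum_eq_det_cauchyKernel β N (L + N) hzw, hprod]
  rfl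

/-- The Cauchy identity for Grothendieck polynomials. Partitions
`λ ⊆ L^N` are encoded as weakly decreasing functions `Fin N → Fin (L+1)`, and
`λ∨_j = L − λ_{N+1−j}`. -/
theorem grothendieck_cauchy_identity (β : ℂ) (N : ℕ) (hN : 1 ≤ N) (L : ℕ)
    (z w : Fin N → ℂ)
    (hz : ∀ j k, j ≠ k → z j ≠ z k) (hw : ∀ j k, j ≠ k → w j ≠ w k)
    (hzw : ∀ j k, z j ≠ w k) :
    ∑ f ∈ Finset.univ.filter
        (fun f : Fin N → Fin (L + 1) => ∀ j k : Fin N, j ≤ k → f k ≤ f j),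
      Groth N β (fun j => (f j : ℕ)) z
        * Groth N β (fun j => L - (f (Fin.rev j) : ℕ)) w
      = (∏ j, ∏ k, if j < k then ((z j - z k) * (w k - w j))⁻¹ else 1)
        * Matrix.det (Matrix.of fun j k : Fin N =>
            ((z j) ^ (L + N) * (1 + β * w k) ^ (N - 1)
              - (w k) ^ (L + N) * (1 + β * z j) ^ (N - 1)) / (z j - w k)) :=
  grothendieck_cauchy_identity_general β N L z w hzw
end
end
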